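/- arXiv:2603.10946 — 4 statements merged into one kernel-verified Lean document; each statement's English description precedes it below -/
import Mathlib

section
/- On pairs of smooth functions on a symplectic surface, the bracket [(σ₁,ψ₁),(σ₂,ψ₂)] = ({ψ₁,σ₂} + {σ₁,ψ₂} - {ψ₁,ψ₂}, {ψ₁,ψ₂}) satisfies the Jacobi identity. -/
/-- The bracket `[(σ₁,ψ₁),(σ₂,ψ₂)] = ({ψ₁,σ₂} + {σ₁,ψ₂} - {ψ₁,ψ₂}, {ψ₁,ψ₂})`
on pairs of functions, where `⁅·,·⁆` is the Poisson bracket. -/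
def pairPoissonBracket {A : Type*} [LieRing A] (p q : A × A) : A × A :=
  (⁅p.2, q.1⁆ + ⁅p.1, q.2⁆ - ⁅p.2, q.2⁆, ⁅p.2, q.2⁆)

/-- On pairs `(σ,ψ)` of smooth functions with a Poisson bracket, the bracket
`[(σ₁,ψ₁),(σ₂,ψ₂)] = ({ψ₁,σ₂} + {σ₁,ψ₂} - {ψ₁,ψ₂}, {ψ₁,ψ₂})` satisfies the
Jacobi identity. -/
theorem stmt2 {A : Type*} [LieRing A] :
    ∀ x y z : A × A,
      pairPoissonBracket (pairPoissonBracket x y) z +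
      pairPoissonBracket (pairPoissonBracket y z) x +
      pairPoissonBracket (pairPoissonBracket z x) y = 0 := by
  have key : ∀ x y z : A, ⁅z, ⁅x, y⁆⁆ = ⁅y, ⁅x, z⁆⁆ - ⁅x, ⁅y, z⁆⁆ := by
    intro x y z
    rw [← lie_skew z ⁅x, y⁆, lie_lie]
    abel
  rintro ⟨a, b⟩ ⟨c, d⟩ ⟨e, f⟩
  simp only [pairPoissonBracket, Prod.mk_add_mk, Prod.mk_eq_zero]
  constructor
  · simp only [lie_add, add_lie, lie_sub, sub_lie, lie_lie,
      ← lie_skew b a, ← lie_skew c a, ← lie_skew c b, ← lie_skew d a, ← lie_skew d b,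
      ← lie_skew d c, ← lie_skew e a, ← lie_skew e b, ← lie_skew e c, ← lie_skew e d,
      ← lie_skew f a, ← lie_skew f b, ← lie_skew f c, ← lie_skew f d, ← lie_skew f e,
      lie_neg, neg_lie, neg_neg]
    rw [key a d f, key b d e, key b c f, key b d f]
    abel
  · simp only [lie_lie, ← lie_skew d b, ← lie_skew f b, ← lie_skew f d, lie_neg, neg_lie, neg_neg]
    rw [key b d f]
    abel
end

section
/- For the Lie algebra f = su(N) × su(N) with bracket [(P,B),(U,V)] = ([B,U]+[P,V]-[B,V],[B,V]) and the pairing ⟨(P₁,B₁),(P₂,B₂)⟩ = tr(P₁P₂) - tr((Δ B₁)B₂) for an invertible self-adjoint operator Δ on su(N) commuting appropriately, the coadjoint operator is ad*_{(P₁,B₁)}(P₂,B₂) = ([P₂,B₁], Δ⁻¹([P₁,P₂] + [P₂,B₁] + [Δ B₂, B₁])), i.e. ⟨ad*_{(P₁,B₁)}(P₂,B₂),(U,V)⟩ = ⟨(P₂,B₂),[(P₁,B₁),(U,V)]⟩ for all (U,V). -/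
namespace Matrix

theorem trace_lie_mul_eq {n R : Type*} [Fintype n] [CommRing R]
    (A B C : Matrix n n R) : (⁅A, B⁆ * C).trace = (A * ⁅B, C⁆).trace := by
  simp only [Ring.lie_def, sub_mul, mul_sub, trace_sub, Matrix.mul_assoc]
  rw [trace_mul_comm B (A * C), Matrix.mul_assoc]

end Matrix

theorem stmt4_general {N : ℕ}
    (Δ : Matrix (Fin N) (Fin N) ℂ ≃ₗ[ℂ] Matrix (Fin N) (Fin N) ℂ)
    (P₁ B₁ P₂ B₂ U V : Matrix (Fin N) (Fin N) ℂ) :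
    (⁅P₂, B₁⁆ * U).trace -
        ((Δ (Δ.symm (⁅P₁, P₂⁆ + ⁅P₂, B₁⁆ + ⁅Δ B₂, B₁⁆))) * V).trace =
      (P₂ * (⁅B₁, U⁆ + ⁅P₁, V⁆ - ⁅B₁, V⁆)).trace - ((Δ B₂) * ⁅B₁, V⁆).trace := by
  have skew : (⁅P₂, P₁⁆ * V).trace = -(⁅P₁, P₂⁆ * V).trace := by
    simp only [Ring.lie_def, sub_mul, Matrix.trace_sub, neg_sub]
  rw [Δ.apply_symm_apply]
  simp only [mul_add, mul_sub, add_mul, Matrix.trace_add, Matrix.trace_sub,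
    ← Matrix.trace_lie_mul_eq, skew]
  ring

/-- For the Lie algebra `f = su(N) × su(N)` with bracket
`[(P,B),(U,V)] = ([B,U] + [P,V] - [B,V], [B,V])` and pairing
`⟨(P₁,B₁),(P₂,B₂)⟩ = tr(P₁P₂) - tr((ΔB₁)B₂)` for an invertible trace-symmetric
operator `Δ`, the coadjoint operator
`ad*_{(P₁,B₁)}(P₂,B₂) = ([P₂,B₁], Δ⁻¹([P₁,P₂] + [P₂,B₁] + [ΔB₂,B₁]))`
satisfies `⟨ad*_{(P₁,B₁)}(P₂,B₂),(U,V)⟩ = ⟨(P₂,B₂),[(P₁,B₁),(U,V)]⟩`. -/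
theorem stmt4 {N : ℕ}
    (Δ : Matrix (Fin N) (Fin N) ℂ ≃ₗ[ℂ] Matrix (Fin N) (Fin N) ℂ)
    (hΔ : ∀ A B : Matrix (Fin N) (Fin N) ℂ,
      ((Δ A) * B).trace = (A * (Δ B)).trace)
    (P₁ B₁ P₂ B₂ U V : Matrix (Fin N) (Fin N) ℂ) :
    (⁅P₂, B₁⁆ * U).trace -
        ((Δ (Δ.symm (⁅P₁, P₂⁆ + ⁅P₂, B₁⁆ + ⁅Δ B₂, B₁⁆))) * V).trace =
      (P₂ * (⁅B₁, U⁆ + ⁅P₁, V⁆ - ⁅B₁, V⁆)).trace - ((Δ B₂) * ⁅B₁, V⁆).trace :=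
  stmt4_general Δ P₁ B₁ P₂ B₂ U V
end

section
/- Along solutions of the matrix flow P' = [P,Ψ] + [Ξ,Q] + 2[Ψ,Ξ], Ξ' = [Ξ,Ψ], the quantity tr(P Ξ^m) is conserved for every natural number m. -/
/-!
`Ξ` obeys a Lax equation, hence so does every power: `(Ξ^m)' = [Ξ^m, Ψ]`. In the derivative of
`tr(P Ξ^m)` the terms `[P,Ψ] Ξ^m + P [Ξ^m,Ψ]` combine to the commutator `[P Ξ^m, Ψ]`, and the
remaining terms `[Ξ,Q] Ξ^m` and `[Ψ,Ξ] Ξ^m` are traceless because `Ξ^m` commutes with `Ξ`.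
-/

open Matrix

attribute [local instance] Matrix.normedAddCommGroup Matrix.normedSpace

theorem Ring.mul_lie {A : Type*} [Ring A] (a b c : A) : ⁅a * b, c⁆ = a * ⁅b, c⁆ + ⁅a, c⁆ * b := by
  simp only [Ring.lie_def]
  noncomm_ring

theorem Matrix.trace_lie_mul_of_commute {n R : Type*} [Fintype n] [CommRing R]
    {A C : Matrix n n R} (h : Commute A C) (B : Matrix n n R) : (⁅A, B⁆ * C).trace = 0 := by
  have hlie : ⁅A, B⁆ * C = ⁅A, B * C⁆ := by
    simp only [Ring.lie_def, sub_mul, Matrix.mul_assoc, h.eq]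
  rw [hlie, LieAlgebra.matrix_trace_commutator_zero]

section Calculus

variable {𝕜 A : Type*} [NontriviallyNormedField 𝕜] [CompleteSpace 𝕜]
  [NormedCommRing A] [NormedAlgebra 𝕜 A] [FiniteDimensional 𝕜 A] {l m n : Type*}
  [Fintype l] [Fintype m] [Fintype n] {t : 𝕜}

theorem HasDerivAt.matrix_mul {u : 𝕜 → Matrix l m A} {v : 𝕜 → Matrix m n A}
    {u' : Matrix l m A} {v' : Matrix m n A} (hu : HasDerivAt u u' t) (hv : HasDerivAt v v' t) :
    HasDerivAt (fun s => u s * v s) (u t * v' + u' * v t) t :=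
  (mulLinearMap 𝕜 : Matrix l m A →ₗ[𝕜] _ →ₗ[𝕜] Matrix l n A).toContinuousBilinearMap
    |>.hasDerivAt_of_bilinear (fun _ => hu) (fun _ => hv)

theorem HasDerivAt.matrix_trace {u : 𝕜 → Matrix n n A} {u' : Matrix n n A}
    (hu : HasDerivAt u u' t) : HasDerivAt (fun s => (u s).trace) u'.trace t :=
  (Matrix.traceLinearMap n 𝕜 A).toContinuousLinearMap.hasFDerivAt.comp_hasDerivAt t hu

variable [DecidableEq n]

theorem HasDerivAt.matrix_pow_of_lie {Ξ : 𝕜 → Matrix n n A} {Ψ : Matrix n n A}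
    (hΞ : HasDerivAt Ξ ⁅Ξ t, Ψ⁆ t) (k : ℕ) : HasDerivAt (fun s => Ξ s ^ k) ⁅Ξ t ^ k, Ψ⁆ t := by
  induction k with
  | zero =>
    simp only [pow_zero, Ring.lie_def, one_mul, mul_one, sub_self]
    exact hasDerivAt_const t _
  | succ k ih => simpa only [pow_succ, Ring.mul_lie] using ih.matrix_mul hΞ

theorem hasDerivAt_trace_mul_pow_eq_zero {P Ξ : 𝕜 → Matrix n n A} {Ψ Q : Matrix n n A}
    (hP : HasDerivAt P (⁅P t, Ψ⁆ + ⁅Ξ t, Q⁆ + 2 • ⁅Ψ, Ξ t⁆) t) (hΞ : HasDerivAt Ξ ⁅Ξ t, Ψ⁆ t)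
    (k : ℕ) : HasDerivAt (fun s => (P s * Ξ s ^ k).trace) 0 t := by
  convert (hP.matrix_mul (hΞ.matrix_pow_of_lie k)).matrix_trace using 1
  have hcomm : Commute (Ξ t) (Ξ t ^ k) := Commute.self_pow _ _
  have hsplit : P t * ⁅Ξ t ^ k, Ψ⁆ + (⁅P t, Ψ⁆ + ⁅Ξ t, Q⁆ + 2 • ⁅Ψ, Ξ t⁆) * Ξ t ^ k =
      ⁅P t * Ξ t ^ k, Ψ⁆ + ⁅Ξ t, Q⁆ * Ξ t ^ k - 2 • (⁅Ξ t, Ψ⁆ * Ξ t ^ k) := by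
    simp only [Ring.lie_def]
    noncomm_ring
  rw [hsplit, trace_sub, trace_add, trace_smul, LieAlgebra.matrix_trace_commutator_zero,
    trace_lie_mul_of_commute hcomm, trace_lie_mul_of_commute hcomm, smul_zero, add_zero,
    sub_zero]

end Calculus

theorem stmt6_general {N : ℕ}
    (Ψ P Q Ξ : ℝ → Matrix (Fin N) (Fin N) ℂ)
    (hP : ∀ t, HasDerivAt P (⁅P t, Ψ t⁆ + ⁅Ξ t, Q t⁆ + 2 • ⁅Ψ t, Ξ t⁆) t)
    (hΞ : ∀ t, HasDerivAt Ξ ⁅Ξ t, Ψ t⁆ t) :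
    ∀ (m : ℕ) (t : ℝ), (P t * Ξ t ^ m).trace = (P 0 * Ξ 0 ^ m).trace := by
  intro m t
  have hderiv := fun s => hasDerivAt_trace_mul_pow_eq_zero (hP s) (hΞ s) m
  exact is_const_of_deriv_eq_zero (fun s => (hderiv s).differentiableAt)
    (fun s => (hderiv s).deriv) t 0

/-- Along solutions of the matrix flow `P' = [P,Ψ] + [Ξ,Q] + 2[Ψ,Ξ]`,
`Ξ' = [Ξ,Ψ]` on `su(N)`, the quantity `tr(P Ξ^m)` is conserved for every
natural number `m`. -/
theorem stmt6 {N : ℕ}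
    (Ψ P Q Ξ : ℝ → Matrix (Fin N) (Fin N) ℂ)
    (hsu : ∀ t, (Ψ t)ᴴ = -Ψ t ∧ (P t)ᴴ = -P t ∧ (Q t)ᴴ = -Q t ∧ (Ξ t)ᴴ = -Ξ t)
    (htr : ∀ t, (Ψ t).trace = 0 ∧ (P t).trace = 0 ∧ (Q t).trace = 0 ∧
      (Ξ t).trace = 0)
    (hP : ∀ t, HasDerivAt P (⁅P t, Ψ t⁆ + ⁅Ξ t, Q t⁆ + 2 • ⁅Ψ t, Ξ t⁆) t)
    (hΞ : ∀ t, HasDerivAt Ξ ⁅Ξ t, Ψ t⁆ t) :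
    ∀ (m : ℕ) (t : ℝ), (P t * Ξ t ^ m).trace = (P 0 * Ξ 0 ^ m).trace :=
  stmt6_general Ψ P Q Ξ hP hΞ
end

section
/- Along solutions of the full matrix flow W' = [W,Ψ] + [Ξ,ΔΞ] + 2[Q,Ψ] + 2[Ξ,P] (with W = ΔΨ), P' = [P,Ψ] + [Ξ,Q] + 2[Ψ,Ξ], Q' = [Q,Ψ] + [Ξ,P], Ξ' = [Ξ,Ψ], the cross-helicity I = tr(Ξ W - P Q) is conserved, assuming Δ is symmetric with respect to the trace form (tr((ΔA)B) = tr(A(ΔB))). -/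
/-!
Both halves of the cross-helicity change at the same rate `2 tr(Ξ[Q,Ψ])`. Every other term
produced by the flow cancels by invariance of the trace form, `tr([A,B]C) = tr(A[B,C])`, which
is trace cyclicity; in particular `tr(A[A,B]) = tr([A,B]B) = 0`.
-/

open Matrix

attribute [local instance] Matrix.normedAddCommGroup Matrix.normedSpace

section TraceForm

attribute [local instance] LieRing.ofAssociativeRing

variable {n R : Type*} [Fintype n] [CommRing R]

namespace Matrix

theorem trace_lie_mul (A B C : Matrix n n R) : trace (⁅A, B⁆ * C) = trace (A * ⁅B, C⁆) := by
  simp only [Ring.lie_def, sub_mul, mul_sub, trace_sub, mul_assoc]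
  rw [trace_mul_cycle' A C B, ← mul_assoc, trace_mul_comm]

variable [DecidableEq n]

theorem trace_mul_lie_self_left (A B : Matrix n n R) : trace (A * ⁅A, B⁆) = 0 := by
  rw [← trace_lie_mul, lie_self, zero_mul, trace_zero]

theorem trace_lie_self_mul_right (A B : Matrix n n R) : trace (⁅A, B⁆ * B) = 0 := by
  rw [trace_lie_mul, lie_self, mul_zero, trace_zero]

theorem trace_mul_lie_self_right (A B : Matrix n n R) : trace (A * ⁅B, A⁆) = 0 := by
  rw [← trace_lie_mul, ← lie_skew, neg_mul, trace_neg, trace_lie_self_mul_right, neg_zero]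

end Matrix

variable [DecidableEq n]

theorem trace_Xi_mul_W_deriv (Ξ Ψ W V P Q : Matrix n n R) :
    trace (⁅Ξ, Ψ⁆ * W) + trace (Ξ * (⁅W, Ψ⁆ + ⁅Ξ, V⁆ + 2 • ⁅Q, Ψ⁆ + 2 • ⁅Ξ, P⁆)) =
      2 * trace (Ξ * ⁅Q, Ψ⁆) := by
  rw [trace_lie_mul, ← lie_skew W Ψ]
  simp only [two_smul, mul_add, mul_neg, trace_add, trace_neg, trace_mul_lie_self_left]
  ring

theorem trace_P_mul_Q_deriv (Ξ Ψ P Q : Matrix n n R) :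
    trace ((⁅P, Ψ⁆ + ⁅Ξ, Q⁆ + 2 • ⁅Ψ, Ξ⁆) * Q) + trace (P * (⁅Q, Ψ⁆ + ⁅Ξ, P⁆)) =
      2 * trace (Ξ * ⁅Q, Ψ⁆) := by
  rw [← lie_skew Ψ Ξ, ← lie_skew Q Ψ]
  simp only [two_smul, add_mul, mul_add, neg_mul, mul_neg, trace_add, trace_neg,
    trace_lie_self_mul_right, trace_mul_lie_self_right, trace_lie_mul]
  ring

end TraceForm

theorem HasDerivAt.matrix_trace_mul {𝕜 𝔸 n : Type*} [NontriviallyNormedField 𝕜]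
    [NormedCommRing 𝔸] [NormedAlgebra 𝕜 𝔸] [Fintype n] {f g : 𝕜 → Matrix n n 𝔸}
    {f' g' : Matrix n n 𝔸} {t : 𝕜} (hf : HasDerivAt f f' t) (hg : HasDerivAt g g' t) :
    HasDerivAt (fun s => trace (f s * g s)) (trace (f' * g t) + trace (f t * g')) t := by
  have entry {h : 𝕜 → Matrix n n 𝔸} {h'} (hh : HasDerivAt h h' t) (i j : n) :
      HasDerivAt (fun s => h s i j) (h' i j) t :=
    hasDerivAt_pi.1 (hasDerivAt_pi.1 hh i) j
  simp only [trace, diag, mul_apply, ← Finset.sum_add_distrib]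
  exact HasDerivAt.fun_sum fun i _ => HasDerivAt.fun_sum fun j _ =>
    (entry hf i j).mul (entry hg j i)

theorem stmt8_general {N : ℕ}
    (Δ : Matrix (Fin N) (Fin N) ℂ ≃ₗ[ℂ] Matrix (Fin N) (Fin N) ℂ)
    (Ψ P Q Ξ : ℝ → Matrix (Fin N) (Fin N) ℂ)
    (hW : ∀ t, HasDerivAt (fun s => Δ (Ψ s))
      (⁅Δ (Ψ t), Ψ t⁆ + ⁅Ξ t, Δ (Ξ t)⁆ + 2 • ⁅Q t, Ψ t⁆ + 2 • ⁅Ξ t, P t⁆) t)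
    (hP : ∀ t, HasDerivAt P (⁅P t, Ψ t⁆ + ⁅Ξ t, Q t⁆ + 2 • ⁅Ψ t, Ξ t⁆) t)
    (hQ : ∀ t, HasDerivAt Q (⁅Q t, Ψ t⁆ + ⁅Ξ t, P t⁆) t)
    (hΞ : ∀ t, HasDerivAt Ξ ⁅Ξ t, Ψ t⁆ t) :
    ∀ t, (Ξ t * Δ (Ψ t) - P t * Q t).trace =
      (Ξ 0 * Δ (Ψ 0) - P 0 * Q 0).trace := by
  have hderiv (u : ℝ) : HasDerivAt (fun s => (Ξ s * Δ (Ψ s) - P s * Q s).trace) 0 u := by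
    simp only [trace_sub]
    refine (((hΞ u).matrix_trace_mul (hW u)).sub
      ((hP u).matrix_trace_mul (hQ u))).congr_deriv ?_
    rw [trace_Xi_mul_W_deriv, trace_P_mul_Q_deriv, sub_self]
  intro t
  exact is_const_of_deriv_eq_zero (fun u => (hderiv u).differentiableAt)
    (fun u => (hderiv u).deriv) t 0

/-- Along solutions of the full matrix flow with `W = ΔΨ`,
`W' = [W,Ψ] + [Ξ,ΔΞ] + 2[Q,Ψ] + 2[Ξ,P]`, `P' = [P,Ψ] + [Ξ,Q] + 2[Ψ,Ξ]`,
`Q' = [Q,Ψ] + [Ξ,P]`, `Ξ' = [Ξ,Ψ]`, the cross-helicity `tr(ΞW - PQ)` is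
conserved, where `Δ` is invertible and symmetric for the trace form. -/
theorem stmt8 {N : ℕ}
    (Δ : Matrix (Fin N) (Fin N) ℂ ≃ₗ[ℂ] Matrix (Fin N) (Fin N) ℂ)
    (hΔ : ∀ A B : Matrix (Fin N) (Fin N) ℂ,
      ((Δ A) * B).trace = (A * (Δ B)).trace)
    (Ψ P Q Ξ : ℝ → Matrix (Fin N) (Fin N) ℂ)
    (hsu : ∀ t, (Ψ t)ᴴ = -Ψ t ∧ (P t)ᴴ = -P t ∧ (Q t)ᴴ = -Q t ∧ (Ξ t)ᴴ = -Ξ t)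
    (htr : ∀ t, (Ψ t).trace = 0 ∧ (P t).trace = 0 ∧ (Q t).trace = 0 ∧
      (Ξ t).trace = 0)
    (hW : ∀ t, HasDerivAt (fun s => Δ (Ψ s))
      (⁅Δ (Ψ t), Ψ t⁆ + ⁅Ξ t, Δ (Ξ t)⁆ + 2 • ⁅Q t, Ψ t⁆ + 2 • ⁅Ξ t, P t⁆) t)
    (hP : ∀ t, HasDerivAt P (⁅P t, Ψ t⁆ + ⁅Ξ t, Q t⁆ + 2 • ⁅Ψ t, Ξ t⁆) t)
    (hQ : ∀ t, HasDerivAt Q (⁅Q t, Ψ t⁆ + ⁅Ξ t, P t⁆) t)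
    (hΞ : ∀ t, HasDerivAt Ξ ⁅Ξ t, Ψ t⁆ t) :
    ∀ t, (Ξ t * Δ (Ψ t) - P t * Q t).trace =
      (Ξ 0 * Δ (Ψ 0) - P 0 * Q 0).trace :=
  stmt8_general Δ Ψ P Q Ξ hW hP hQ hΞ
end
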